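/- arXiv:2502.10139 — 5 statements merged into one kernel-verified Lean document; each statement's English description precedes it below -/
import Mathlib

section
/- Let α > 1 and define d(i,j) = max(|i - j|, 1) for integers i, j, and u = 2^α · ∑_{m ∈ ℤ} d(0,m)^{-α} (a finite constant). Then for all integers i, j: ∑_{k ∈ ℤ} d(i,k)^{-α} · d(k,j)^{-α} ≤ u · d(i,j)^{-α}. -/
/-- Modified distance on the one-dimensional lattice `ℤ`: `d i j = max |i - j| 1`. -/
noncomputable def dZ (i j : ℤ) : ℝ := max |(i : ℝ) - (j : ℝ)| 1

lemma one_le_dZ (i j : ℤ) : 1 ≤ dZ i j := le_max_right _ _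

lemma dZ_pos (i j : ℤ) : 0 < dZ i j := lt_of_lt_of_le one_pos (one_le_dZ i j)

lemma dZ_symm (i j : ℤ) : dZ i j = dZ j i := by
  unfold dZ; rw [abs_sub_comm]

lemma dZ_shift (i m : ℤ) : dZ i (i + m) = dZ 0 m := by
  unfold dZ
  push_cast
  ring_nf

lemma dZ_triangle (i j k : ℤ) : dZ i j ≤ dZ i k + dZ k j := by
  have h1 : |(i : ℝ) - j| ≤ |(i : ℝ) - k| + |(k : ℝ) - j| := by
    have := abs_sub_le (i : ℝ) (k : ℝ) (j : ℝ)
    linarith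
  have h2 : |(i : ℝ) - j| ≤ dZ i k + dZ k j :=
    h1.trans (add_le_add (le_max_left _ _) (le_max_left _ _))
  have h3 : (1 : ℝ) ≤ dZ i k + dZ k j := by
    have := one_le_dZ i k; have := dZ_pos k j; linarith
  exact max_le h2 h3

/-- convexity: `(a+b)^α ≤ 2^(α-1) (a^α + b^α)` for nonneg reals and `α ≥ 1`. -/
lemma convex_rpow {α : ℝ} (hα : 1 ≤ α) {a b : ℝ} (ha : 0 ≤ a) (hb : 0 ≤ b) :
    (a + b) ^ α ≤ 2 ^ (α - 1) * (a ^ α + b ^ α) := by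
  lift a to NNReal using ha
  lift b to NNReal using hb
  have := NNReal.rpow_add_le_mul_rpow_add_rpow a b hα
  exact_mod_cast this

/-- summability of the basic power-law weights. -/
lemma summable_dZ0 {α : ℝ} (hα : 1 < α) : Summable (fun k : ℤ => dZ 0 k ^ (-α)) := by
  have hg1 : Summable (fun k : ℤ => |(k : ℝ)| ^ (-α)) := Real.summable_abs_int_rpow hα
  have hg2 : Summable (fun k : ℤ => if k = 0 then (1 : ℝ) else 0) := by
    apply summable_of_ne_finset_zero (s := {0})
    intro b hb
    simp only [Finset.mem_singleton] at hb
    simp [hb]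
  refine Summable.of_nonneg_of_le (fun k => ?_) (fun k => ?_) (hg1.add hg2)
  · exact Real.rpow_nonneg (dZ_pos 0 k).le _
  · by_cases hk : k = 0
    · subst hk
      have h1 : dZ 0 0 = 1 := by unfold dZ; simp
      rw [h1]
      have : ((0 : ℤ) : ℝ) = 0 := by norm_num
      simp [this, Real.zero_rpow (by linarith : -α ≠ 0)]
    · have hk' : (0 : ℝ) < |(k : ℝ)| := by
        have : (k : ℝ) ≠ 0 := Int.cast_ne_zero.mpr hk
        positivity
      have hle : |(k : ℝ)| ≤ dZ 0 k := by
        unfold dZ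
        simp only [Int.cast_zero, zero_sub, abs_neg]
        exact le_max_left _ _
      have := Real.rpow_le_rpow_of_nonpos hk' hle (by linarith : -α ≤ 0)
      simp only [hk, if_false, add_zero]
      exact this

lemma summable_dZ {α : ℝ} (hα : 1 < α) (i : ℤ) :
    Summable (fun k : ℤ => dZ i k ^ (-α)) := by
  have h := summable_dZ0 hα
  have : ((fun k : ℤ => dZ i k ^ (-α)) ∘ (Equiv.addLeft i)) = fun m : ℤ => dZ 0 m ^ (-α) := by
    funext m
    simp [Function.comp, Equiv.coe_addLeft, dZ_shift]
  rw [← (Equiv.addLeft i).summable_iff, this]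
  exact h

lemma tsum_dZ {α : ℝ} (i : ℤ) :
    ∑' k : ℤ, dZ i k ^ (-α) = ∑' m : ℤ, dZ 0 m ^ (-α) := by
  rw [← (Equiv.addLeft i).tsum_eq (fun k : ℤ => dZ i k ^ (-α))]
  congr 1
  funext m
  simp [Equiv.coe_addLeft, dZ_shift]

/-- Convolution (chain) inequality for power-law weights on `ℤ`:
for `α > 1` and `u = 2^α ∑_m d(0,m)^{-α}`,
`∑_k d(i,k)^{-α} d(k,j)^{-α} ≤ u · d(i,j)^{-α}`. -/
theorem stmt_1 (α : ℝ) (hα : 1 < α) (u : ℝ)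
    (hu : u = 2 ^ α * ∑' m : ℤ, dZ 0 m ^ (-α)) (i j : ℤ) :
    ∑' k : ℤ, dZ i k ^ (-α) * dZ k j ^ (-α) ≤ u * dZ i j ^ (-α) := by
  set C : ℝ := 2 ^ (α - 1) with hC
  have hCpos : (0 : ℝ) < C := Real.rpow_pos_of_pos two_pos _
  -- pointwise bound
  have key : ∀ k : ℤ, dZ i k ^ (-α) * dZ k j ^ (-α)
      ≤ C * dZ i j ^ (-α) * (dZ i k ^ (-α) + dZ k j ^ (-α)) := by
    intro k
    have ha := dZ_pos i k
    have hb := dZ_pos k j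
    have hd := dZ_pos i j
    have hA : (0:ℝ) < dZ i k ^ α := Real.rpow_pos_of_pos ha _
    have hB : (0:ℝ) < dZ k j ^ α := Real.rpow_pos_of_pos hb _
    have hD : (0:ℝ) < dZ i j ^ α := Real.rpow_pos_of_pos hd _
    have htri : dZ i j ^ α ≤ C * (dZ i k ^ α + dZ k j ^ α) := by
      calc dZ i j ^ α ≤ (dZ i k + dZ k j) ^ α :=
            Real.rpow_le_rpow hd.le (dZ_triangle i j k) (by linarith)
        _ ≤ C * (dZ i k ^ α + dZ k j ^ α) := convex_rpow hα.le ha.le hb.le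
    rw [Real.rpow_neg ha.le, Real.rpow_neg hb.le, Real.rpow_neg hd.le]
    have h1 : (dZ i k ^ α)⁻¹ * (dZ k j ^ α)⁻¹ * (dZ i j ^ α)
        ≤ (dZ i k ^ α)⁻¹ * (dZ k j ^ α)⁻¹ * (C * (dZ i k ^ α + dZ k j ^ α)) := by
      apply mul_le_mul_of_nonneg_left htri
      positivity
    have e1 : (dZ i k ^ α)⁻¹ * (dZ k j ^ α)⁻¹ * (dZ i k ^ α + dZ k j ^ α)
        = (dZ i k ^ α)⁻¹ + (dZ k j ^ α)⁻¹ := by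
      field_simp
      ring
    have h2 : (dZ i k ^ α)⁻¹ * (dZ k j ^ α)⁻¹ * (C * (dZ i k ^ α + dZ k j ^ α))
        = C * ((dZ i k ^ α)⁻¹ + (dZ k j ^ α)⁻¹) := by
      rw [← e1]; ring
    have h3 : (dZ i k ^ α)⁻¹ * (dZ k j ^ α)⁻¹
        ≤ C * (dZ i j ^ α)⁻¹ * ((dZ i k ^ α)⁻¹ + (dZ k j ^ α)⁻¹) := by
      rw [h2] at h1
      calc (dZ i k ^ α)⁻¹ * (dZ k j ^ α)⁻¹
          = ((dZ i k ^ α)⁻¹ * (dZ k j ^ α)⁻¹ * (dZ i j ^ α)) * (dZ i j ^ α)⁻¹ := by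
            field_simp
        _ ≤ (C * ((dZ i k ^ α)⁻¹ + (dZ k j ^ α)⁻¹)) * (dZ i j ^ α)⁻¹ := by
            apply mul_le_mul_of_nonneg_right h1 (by positivity)
        _ = C * (dZ i j ^ α)⁻¹ * ((dZ i k ^ α)⁻¹ + (dZ k j ^ α)⁻¹) := by ring
    exact h3
  -- summability
  have hS1 : Summable (fun k : ℤ => dZ i k ^ (-α)) := summable_dZ hα i
  have hS2 : Summable (fun k : ℤ => dZ k j ^ (-α)) := by
    have := summable_dZ hα j
    apply this.congr
    intro k
    rw [dZ_symm]
  have hRsum : Summable (fun k : ℤ => C * dZ i j ^ (-α) * (dZ i k ^ (-α) + dZ k j ^ (-α))) :=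
    (hS1.add hS2).mul_left _
  have hLsum : Summable (fun k : ℤ => dZ i k ^ (-α) * dZ k j ^ (-α)) := by
    refine Summable.of_nonneg_of_le (fun k => ?_) key hRsum
    exact mul_nonneg (Real.rpow_nonneg (dZ_pos i k).le _) (Real.rpow_nonneg (dZ_pos k j).le _)
  have hts2 : ∑' k : ℤ, dZ k j ^ (-α) = ∑' m : ℤ, dZ 0 m ^ (-α) := by
    rw [← tsum_dZ (α := α) j]
    exact tsum_congr fun k => by rw [dZ_symm]
  calc ∑' k : ℤ, dZ i k ^ (-α) * dZ k j ^ (-α)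
      ≤ ∑' k : ℤ, C * dZ i j ^ (-α) * (dZ i k ^ (-α) + dZ k j ^ (-α)) :=
        Summable.tsum_le_tsum key hLsum hRsum
    _ = C * dZ i j ^ (-α) * ((∑' k : ℤ, dZ i k ^ (-α)) + ∑' k : ℤ, dZ k j ^ (-α)) := by
        rw [tsum_mul_left, Summable.tsum_add hS1 hS2]
    _ = u * dZ i j ^ (-α) := by
        rw [tsum_dZ, hts2, hu, hC]
        have h2 : (2 : ℝ) ^ α = 2 ^ (α - 1) * 2 := by
          rw [← Real.rpow_add_one two_ne_zero (α - 1)]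
          ring_nf
        rw [h2]
        ring
end

section
/- Let α > D and define d(i,j) = max(‖i - j‖₁, 1) for i, j ∈ ℤ^D, and u = 2^α · ∑_{m ∈ ℤ^D} d(0,m)^{-α}, which is finite. Then for all i, j ∈ ℤ^D: ∑_{k ∈ ℤ^D} d(i,k)^{-α} d(k,j)^{-α} ≤ u · d(i,j)^{-α}. -/
set_option maxHeartbeats 1000000

noncomputable def dLat {D : ℕ} (i j : Fin D → ℤ) : ℝ :=
  max (∑ t, |(i t : ℝ) - (j t : ℝ)|) 1

lemma dLat_one_le {D : ℕ} (i j : Fin D → ℤ) : 1 ≤ dLat i j := le_max_right _ _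

lemma dLat_pos {D : ℕ} (i j : Fin D → ℤ) : 0 < dLat i j :=
  lt_of_lt_of_le one_pos (dLat_one_le i j)

lemma dLat_eq_sub {D : ℕ} (i k : Fin D → ℤ) : dLat i k = dLat 0 (k - i) := by
  unfold dLat
  congr 1
  refine Finset.sum_congr rfl fun t _ => ?_
  simp [abs_sub_comm]


lemma dLat_symm {D : ℕ} (i k : Fin D → ℤ) : dLat i k = dLat k i := by
  unfold dLat
  congr 1
  exact Finset.sum_congr rfl fun t _ => abs_sub_comm _ _

lemma dLat_triangle {D : ℕ} (i j k : Fin D → ℤ) : dLat i j ≤ dLat i k + dLat k j := by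
  unfold dLat
  apply max_le
  · calc ∑ t, |(i t : ℝ) - (j t : ℝ)| ≤ ∑ t, (|(i t : ℝ) - (k t : ℝ)| + |(k t : ℝ) - (j t : ℝ)|) :=
        Finset.sum_le_sum fun t _ => abs_sub_le _ _ _
      _ = (∑ t, |(i t : ℝ) - (k t : ℝ)|) + ∑ t, |(k t : ℝ) - (j t : ℝ)| := Finset.sum_add_distrib
      _ ≤ _ := add_le_add (le_max_left _ _) (le_max_left _ _)
  · linarith [le_max_right (∑ t, |(i t : ℝ) - (k t : ℝ)|) 1,
      le_max_right (∑ t, |(k t : ℝ) - (j t : ℝ)|) 1]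

lemma real_add_rpow_le {p a b : ℝ} (ha : 0 ≤ a) (hb : 0 ≤ b) (hp : 1 ≤ p) :
    (a + b) ^ p ≤ 2 ^ (p - 1) * (a ^ p + b ^ p) := by
  lift a to NNReal using ha
  lift b to NNReal using hb
  have := NNReal.rpow_add_le_mul_rpow_add_rpow a b hp
  exact_mod_cast this

lemma summable_zfun {β : ℝ} (hβ : 1 < β) : Summable (fun z : ℤ => max |(z : ℝ)| 1 ^ (-β)) := by
  have h1 : Summable (fun z : ℤ => |(z : ℝ)| ^ (-β) + if z = 0 then 1 else 0) := by
    refine (Real.summable_abs_int_rpow hβ).add ?_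
    apply summable_of_ne_finset_zero (s := {0})
    intro z hz
    simp only [Finset.mem_singleton] at hz
    simp [hz]
  refine h1.congr fun z => ?_
  by_cases hz : z = 0
  · subst hz; simp [Real.zero_rpow (by linarith : -β ≠ 0)]
  · have : (1 : ℝ) ≤ |(z : ℝ)| := by
      have : (1 : ℤ) ≤ |z| := Int.one_le_abs (by exact_mod_cast hz)
      calc (1:ℝ) ≤ (|z| : ℝ) := by exact_mod_cast this
        _ = |(z : ℝ)| := by push_cast; ring
    rw [max_eq_left this]
    simp [hz]

lemma summable_pi_prod {D : ℕ} {β : ℝ} (hβ : 1 < β) :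
    Summable (fun m : Fin D → ℤ => ∏ t, max |(m t : ℝ)| 1 ^ (-β)) := by
  induction D with
  | zero =>
      simp only [Finset.univ_eq_empty, Finset.prod_empty]
      exact summable_of_finite_support (Set.toFinite _)
  | succ n ih =>
      rw [← (Fin.consEquiv fun _ : Fin (n+1) => ℤ).summable_iff]
      have : ((fun m : Fin (n+1) → ℤ => ∏ t, max |(m t : ℝ)| 1 ^ (-β)) ∘
          (Fin.consEquiv fun _ => ℤ)) = fun p : ℤ × (Fin n → ℤ) =>
          (max |(p.1 : ℝ)| 1 ^ (-β)) * ∏ t, max |(p.2 t : ℝ)| 1 ^ (-β) := by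
        funext p
        have hp : (Fin.consEquiv fun _ : Fin (n+1) => ℤ) p = Fin.cons p.1 p.2 := rfl
        rw [Function.comp_apply, hp, Fin.prod_univ_succ]
        simp
      rw [this]
      have hf : Summable fun z : ℤ => ‖max |(z : ℝ)| 1 ^ (-β)‖ := by
        simpa only [Real.norm_eq_abs] using (summable_zfun hβ).abs
      have hg : Summable fun m : Fin n → ℤ => ‖∏ t, max |(m t : ℝ)| 1 ^ (-β)‖ := by
        simpa only [Real.norm_eq_abs] using ih.abs
      have key := summable_mul_of_summable_norm (R := ℝ) hf hg
      exact key

lemma summable_g {D : ℕ} (hD : 0 < D) {α : ℝ} (hα : (D : ℝ) < α) :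
    Summable (fun m : Fin D → ℤ => dLat 0 m ^ (-α)) := by
  have hD' : (0 : ℝ) < D := by exact_mod_cast hD
  have hβ : 1 < α / D := (one_lt_div hD').mpr hα
  refine (summable_pi_prod (β := α / D) hβ).of_nonneg_of_le
    (fun m => Real.rpow_nonneg (dLat_pos _ _).le _) (fun m => ?_)
  have h1 : ∀ t, max |(m t : ℝ)| 1 ≤ dLat 0 m := by
    intro t
    unfold dLat
    refine max_le_max ?_ le_rfl
    calc |(m t : ℝ)| = |((0 : Fin D → ℤ) t : ℝ) - (m t : ℝ)| := by simp
      _ ≤ ∑ s, |((0 : Fin D → ℤ) s : ℝ) - (m s : ℝ)| :=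
        Finset.single_le_sum (f := fun s => |((0 : Fin D → ℤ) s : ℝ) - (m s : ℝ)|)
          (fun s _ => abs_nonneg _) (Finset.mem_univ t)
  have hP : (1 : ℝ) ≤ ∏ t, max |(m t : ℝ)| 1 := by
    calc (1 : ℝ) = ∏ _t : Fin D, (1 : ℝ) := by simp
      _ ≤ ∏ t, max |(m t : ℝ)| 1 :=
        Finset.prod_le_prod (fun t _ => zero_le_one) (fun t _ => le_max_right _ _)
  have hPd : (∏ t, max |(m t : ℝ)| 1) ≤ dLat 0 m ^ D := by
    calc (∏ t, max |(m t : ℝ)| 1) ≤ ∏ _t : Fin D, dLat 0 m :=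
        Finset.prod_le_prod (fun t _ => by positivity) (fun t _ => h1 t)
      _ = dLat 0 m ^ D := by simp
  have e1 : dLat 0 m ^ (-α) = (dLat 0 m ^ D) ^ (-(α / D)) := by
    rw [← Real.rpow_natCast (dLat 0 m) D, ← Real.rpow_mul (dLat_pos _ _).le]
    congr 1
    field_simp
  rw [e1]
  calc (dLat 0 m ^ D) ^ (-(α / D)) ≤ (∏ t, max |(m t : ℝ)| 1) ^ (-(α / D)) :=
      Real.rpow_le_rpow_of_nonpos (lt_of_lt_of_le one_pos hP) hPd
        (by rw [neg_nonpos]; positivity)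
    _ = ∏ t, max |(m t : ℝ)| 1 ^ (-(α / D)) :=
      (Real.finset_prod_rpow _ _ (fun t _ => by positivity) _).symm

lemma key_ineq {α a b d : ℝ} (hα : 1 ≤ α) (ha : 1 ≤ a) (hb : 1 ≤ b) (hd1 : 1 ≤ d)
    (hdab : d ≤ a + b) :
    a ^ (-α) * b ^ (-α) ≤ 2 ^ (α - 1) * d ^ (-α) * (a ^ (-α) + b ^ (-α)) := by
  have ha0 : (0 : ℝ) < a := lt_of_lt_of_le one_pos ha
  have hb0 : (0 : ℝ) < b := lt_of_lt_of_le one_pos hb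
  have hd0 : (0 : ℝ) < d := lt_of_lt_of_le one_pos hd1
  have hKey : d ^ α ≤ 2 ^ (α - 1) * (a ^ α + b ^ α) := by
    calc d ^ α ≤ (a + b) ^ α :=
        Real.rpow_le_rpow hd0.le hdab (le_trans zero_le_one hα)
      _ ≤ 2 ^ (α - 1) * (a ^ α + b ^ α) := real_add_rpow_le ha0.le hb0.le hα
  have hA : (0 : ℝ) < a ^ α := Real.rpow_pos_of_pos ha0 _
  have hB : (0 : ℝ) < b ^ α := Real.rpow_pos_of_pos hb0 _
  have hD : (0 : ℝ) < d ^ α := Real.rpow_pos_of_pos hd0 _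
  have h2 : (0 : ℝ) < 2 ^ (α - 1) := Real.rpow_pos_of_pos two_pos _
  rw [Real.rpow_neg ha0.le, Real.rpow_neg hb0.le, Real.rpow_neg hd0.le]
  have lhs : (a ^ α)⁻¹ * (b ^ α)⁻¹ = d ^ α / (d ^ α * (a ^ α * b ^ α)) := by
    field_simp
  have expand : 2 ^ (α - 1) * (d ^ α)⁻¹ * ((a ^ α)⁻¹ + (b ^ α)⁻¹) =
      (2 ^ (α - 1) * (a ^ α + b ^ α)) / (d ^ α * (a ^ α * b ^ α)) := by
    field_simp
    ring_nf
  rw [lhs, expand]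
  exact (div_le_div_iff_of_pos_right (by positivity)).mpr hKey

/-- Convolution (chain) inequality for power-law weights on `ℤ^D`:
for `α > D` and `u = 2^α ∑_{m ∈ ℤ^D} d(0,m)^{-α}` (a finite constant),
`∑_{k ∈ ℤ^D} d(i,k)^{-α} d(k,j)^{-α} ≤ u · d(i,j)^{-α}`. -/
theorem stmt_2 (D : ℕ) (α : ℝ) (hα : (D : ℝ) < α) (u : ℝ)
    (hu : u = 2 ^ α * ∑' m : Fin D → ℤ, dLat 0 m ^ (-α)) (i j : Fin D → ℤ) :
    ∑' k : Fin D → ℤ, dLat i k ^ (-α) * dLat k j ^ (-α) ≤ u * dLat i j ^ (-α) := by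
  rcases Nat.eq_zero_or_pos D with hD | hD
  · subst hD
    have h0 : (0 : ℝ) < α := by exact_mod_cast hα
    have hone : ∀ i' j' : Fin 0 → ℤ, dLat i' j' = 1 := by
      intro i' j'; simp [dLat]
    have htsum : ∀ f : (Fin 0 → ℤ) → ℝ, ∑' k : Fin 0 → ℤ, f k = f default :=
      fun f => tsum_eq_single default fun b hb =>
        absurd (Subsingleton.elim b default) hb
    rw [hu, htsum, htsum]
    simp only [hone, Real.one_rpow, mul_one, one_mul]
    exact Real.one_le_rpow one_le_two h0.le
  · have hD' : (1 : ℝ) ≤ (D : ℝ) := by exact_mod_cast hD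
    have hα1 : (1 : ℝ) ≤ α := le_trans hD' hα.le
    set g : (Fin D → ℤ) → ℝ := fun m => dLat 0 m ^ (-α) with hg_def
    have hg : Summable g := summable_g hD hα
    have hgi : Summable fun k : Fin D → ℤ => g (k - i) :=
      (Equiv.subRight i).summable_iff.mpr hg
    have hgj : Summable fun k : Fin D → ℤ => g (k - j) :=
      (Equiv.subRight j).summable_iff.mpr hg
    have hsumR : Summable fun k : Fin D → ℤ => g (k - i) + g (k - j) := hgi.add hgj
    have hpoint : ∀ k : Fin D → ℤ, dLat i k ^ (-α) * dLat k j ^ (-α) ≤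
        2 ^ (α - 1) * dLat i j ^ (-α) * (g (k - i) + g (k - j)) := by
      intro k
      have e1 : g (k - i) = dLat i k ^ (-α) := by
        show dLat 0 (k - i) ^ (-α) = _
        rw [← dLat_eq_sub]
      have e2 : g (k - j) = dLat k j ^ (-α) := by
        show dLat 0 (k - j) ^ (-α) = _
        rw [← dLat_eq_sub j k, dLat_symm j k]
      rw [e1, e2]
      exact key_ineq hα1 (dLat_one_le i k) (dLat_one_le k j) (dLat_one_le i j)
        (dLat_triangle i j k)
    have hRHS : Summable fun k : Fin D → ℤ =>
        2 ^ (α - 1) * dLat i j ^ (-α) * (g (k - i) + g (k - j)) := hsumR.mul_left _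
    have hLHS : Summable fun k : Fin D → ℤ => dLat i k ^ (-α) * dLat k j ^ (-α) :=
      hRHS.of_nonneg_of_le (fun k => mul_nonneg (Real.rpow_nonneg (dLat_pos _ _).le _)
        (Real.rpow_nonneg (dLat_pos _ _).le _)) hpoint
    have hti : ∑' k : Fin D → ℤ, g (k - i) = ∑' m, g m := by
      simpa using (Equiv.subRight i).tsum_eq g
    have htj : ∑' k : Fin D → ℤ, g (k - j) = ∑' m, g m := by
      simpa using (Equiv.subRight j).tsum_eq g
    have h2 : (2 : ℝ) ^ α = 2 ^ (α - 1) * 2 := by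
      rw [Real.rpow_sub two_pos, Real.rpow_one]
      field_simp
    calc ∑' k : Fin D → ℤ, dLat i k ^ (-α) * dLat k j ^ (-α)
        ≤ ∑' k : Fin D → ℤ, 2 ^ (α - 1) * dLat i j ^ (-α) * (g (k - i) + g (k - j)) :=
          Summable.tsum_le_tsum hpoint hLHS hRHS
      _ = 2 ^ (α - 1) * dLat i j ^ (-α) *
            ((∑' k : Fin D → ℤ, g (k - i)) + ∑' k : Fin D → ℤ, g (k - j)) := by
          rw [tsum_mul_left, Summable.tsum_add hgi hgj]
      _ = u * dLat i j ^ (-α) := by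
          rw [hti, htj, hu, h2]
          ring
end

section
/- Let α > 1 and d(i,j)=max(|i-j|,1). Then ∑_{k ≥ n, p < n, p' ≥ 0, ℓ' < 0 with n > p > p' ≥ 0} d(k,p)^{-2α} d(p,p')^{-α} d(p',ℓ')^{-2α} ≤ C · n^{-α} for some constant C depending only on α; in particular, for 1 < α ≤ 2 this quantity is O(n^{2-2α}) and for α > 2 it is O(n^{-α}). -/
open Finset

noncomputable def realZeta (α : ℝ) : ℝ := ∑' m : ℕ, ((m : ℝ) + 1) ^ (-α)

lemma dZ_eq_sub {i j : ℤ} (h : j < i) : dZ i j = (i : ℝ) - j := by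
  have : (1 : ℝ) ≤ (i : ℝ) - j := by
    rw [le_sub_iff_add_le']; exact_mod_cast h
  rw [dZ, abs_of_nonneg (by linarith), max_eq_left this]

section

variable {α : ℝ}

lemma add_rpow_neg_two_mul_le (hα : 0 ≤ α) {c x : ℝ} (hc : 1 ≤ c) (hx : 0 ≤ x) :
    (c + x) ^ (-(2 * α)) ≤ c ^ (-α) * (x + 1) ^ (-α) := by
  rw [show -(2 * α) = -α + -α by ring, Real.rpow_add (by linarith)]
  exact mul_le_mul (Real.rpow_le_rpow_of_nonpos (by linarith) (by linarith) (by linarith))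
    (Real.rpow_le_rpow_of_nonpos (by linarith) (by linarith) (by linarith))
    (Real.rpow_nonneg (by linarith) _) (Real.rpow_nonneg (by linarith) _)

lemma mul_mul_le_of_le_or {m x y z : ℝ} (hx : 0 ≤ x) (hy : 0 ≤ y) (hz : 0 ≤ z)
    (h : x ≤ m ∨ y ≤ m ∨ z ≤ m) : x * y * z ≤ m * (y * z + x * z + x * y) := by
  have := mul_nonneg hx hy; have := mul_nonneg hx hz; have := mul_nonneg hy hz
  rcases h with h | h | h <;> nlinarith

lemma rpow_neg_mul_mul_le_of_le_add_add (hα : 0 ≤ α) {N U V W : ℝ} (hN : 0 < N) (hU : 0 < U)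
    (hV : 0 < V) (hW : 0 < W) (hNUVW : N ≤ U + V + W) :
    U ^ (-α) * V ^ (-α) * W ^ (-α) ≤
      (N / 3) ^ (-α) * (V ^ (-α) * W ^ (-α) + U ^ (-α) * W ^ (-α) + U ^ (-α) * V ^ (-α)) := by
  have anti {X : ℝ} (hX : N / 3 ≤ X) : X ^ (-α) ≤ (N / 3) ^ (-α) :=
    Real.rpow_le_rpow_of_nonpos (by positivity) hX (by linarith)
  have hmax : N / 3 ≤ U ∨ N / 3 ≤ V ∨ N / 3 ≤ W := by
    by_contra! h
    linarith [h.1, h.2.1, h.2.2]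
  exact mul_mul_le_of_le_or (Real.rpow_nonneg hU.le _) (Real.rpow_nonneg hV.le _)
    (Real.rpow_nonneg hW.le _) (hmax.imp anti (Or.imp anti anti))

lemma summable_nat_add_one_rpow_neg (hα : 1 < α) :
    Summable fun m : ℕ => ((m : ℝ) + 1) ^ (-α) := by
  simpa using (summable_nat_add_iff 1).2 (Real.summable_nat_rpow.2 (by linarith : -α < -1))

lemma sum_range_le_realZeta (hα : 1 < α) (N : ℕ) :
    ∑ m ∈ range N, ((m : ℝ) + 1) ^ (-α) ≤ realZeta α :=
  (summable_nat_add_one_rpow_neg hα).sum_le_tsum _ fun _ _ => by positivity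

lemma one_le_realZeta (hα : 1 < α) : 1 ≤ realZeta α := by
  simpa using sum_range_le_realZeta hα 1

lemma sum_range_sub_rpow_neg (n : ℕ) :
    ∑ p ∈ range n, ((n : ℝ) - p) ^ (-α) = ∑ m ∈ range n, ((m : ℝ) + 1) ^ (-α) := by
  induction n with
  | zero => simp
  | succ n ih =>
    rw [sum_range_succ', sum_range_succ, ← ih]
    push_cast
    ring_nf

lemma sum_Ico_sub_rpow_neg (c n : ℕ) :
    ∑ p ∈ Ico (c + 1) n, ((p : ℝ) - c) ^ (-α) =
      ∑ m ∈ range (n - (c + 1)), ((m : ℝ) + 1) ^ (-α) := by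
  rw [sum_Ico_eq_sum_range]
  push_cast
  ring_nf

lemma sum_sum_mul_le {ι κ : Type*} {s : Finset ι} {t : ι → Finset κ} {f : ι → ℝ} {g : ι → κ → ℝ}
    {A B : ℝ} (hf₀ : ∀ i ∈ s, 0 ≤ f i) (hf : ∑ i ∈ s, f i ≤ A) (hg : ∀ i ∈ s, ∑ j ∈ t i, g i j ≤ B)
    (hB : 0 ≤ B) : ∑ i ∈ s, ∑ j ∈ t i, f i * g i j ≤ A * B :=
  calc ∑ i ∈ s, ∑ j ∈ t i, f i * g i j ≤ ∑ i ∈ s, f i * B := by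
        simp_rw [← mul_sum]
        exact sum_le_sum fun i hi => mul_le_mul_of_nonneg_left (hg i hi) (hf₀ i hi)
    _ = (∑ i ∈ s, f i) * B := (sum_mul ..).symm
    _ ≤ A * B := mul_le_mul_of_nonneg_right hf hB

lemma sum_sum_rpow_neg_conv_le (hα : 1 < α) (n : ℕ) :
    ∑ p ∈ range n, ∑ p' ∈ range p,
        ((n : ℝ) - p) ^ (-α) * ((p : ℝ) - p') ^ (-α) * ((p' : ℝ) + 1) ^ (-α)
      ≤ (n / 3 : ℝ) ^ (-α) * (3 * realZeta α ^ 2) := by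
  have hZ : 0 ≤ realZeta α := zero_le_one.trans (one_le_realZeta hα)
  have hU : ∀ p ∈ range n, 0 < (n : ℝ) - p := fun p hp => sub_pos.2 (Nat.cast_lt.2 (mem_range.1 hp))
  have hV : ∀ p p' : ℕ, p' ∈ range p → 0 < (p : ℝ) - p' := fun p p' hp' =>
    sub_pos.2 (Nat.cast_lt.2 (mem_range.1 hp'))
  have hsubZ (p : ℕ) : ∑ p' ∈ range p, ((p : ℝ) - p') ^ (-α) ≤ realZeta α := by
    rw [sum_range_sub_rpow_neg]; exact sum_range_le_realZeta hα p
  have hVW : ∑ p ∈ range n, ∑ p' ∈ range p, ((p : ℝ) - p') ^ (-α) * ((p' : ℝ) + 1) ^ (-α)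
      ≤ realZeta α * realZeta α := by
    rw [sum_comm' (t' := range n) (s' := fun p' => Ico (p' + 1) n)
      (fun p p' => by simp only [mem_range, mem_Ico]; omega)]
    refine (sum_congr rfl fun _ _ => sum_congr rfl fun _ _ => mul_comm _ _).trans_le <|
      sum_sum_mul_le (fun _ _ => by positivity) (sum_range_le_realZeta hα n)
      (fun p' _ => ?_) hZ
    rw [sum_Ico_sub_rpow_neg]; exact sum_range_le_realZeta hα _
  have hUW : ∑ p ∈ range n, ∑ p' ∈ range p, ((n : ℝ) - p) ^ (-α) * ((p' : ℝ) + 1) ^ (-α)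
      ≤ realZeta α * realZeta α :=
    sum_sum_mul_le (fun p hp => (Real.rpow_nonneg (hU p hp).le _)) (hsubZ n)
      (fun p _ => sum_range_le_realZeta hα p) hZ
  have hUV : ∑ p ∈ range n, ∑ p' ∈ range p, ((n : ℝ) - p) ^ (-α) * ((p : ℝ) - p') ^ (-α)
      ≤ realZeta α * realZeta α :=
    sum_sum_mul_le (fun p hp => (Real.rpow_nonneg (hU p hp).le _)) (hsubZ n) (fun p _ => hsubZ p) hZ
  calc _ ≤ ∑ p ∈ range n, ∑ p' ∈ range p, (n / 3 : ℝ) ^ (-α) *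
        (((p : ℝ) - p') ^ (-α) * ((p' : ℝ) + 1) ^ (-α)
          + ((n : ℝ) - p) ^ (-α) * ((p' : ℝ) + 1) ^ (-α)
          + ((n : ℝ) - p) ^ (-α) * ((p : ℝ) - p') ^ (-α)) := by
        refine sum_le_sum fun p hp => sum_le_sum fun p' hp' => ?_
        exact rpow_neg_mul_mul_le_of_le_add_add (by linarith)
          (Nat.cast_pos.2 (Nat.zero_lt_of_lt (mem_range.1 hp))) (hU p hp) (hV p p' hp')
          (by positivity) (by linarith)
    _ ≤ (n / 3 : ℝ) ^ (-α) * (3 * realZeta α ^ 2) := by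
        simp_rw [← mul_sum, sum_add_distrib]
        gcongr
        linarith

lemma dZ_rpow_prod_le (hα : 0 ≤ α) {n p p' : ℕ} (a b : ℕ) (hp : p < n) (hp' : p' < p) :
    dZ ((n : ℤ) + (a : ℤ)) (p : ℤ) ^ (-(2 * α)) * dZ (p : ℤ) (p' : ℤ) ^ (-α) *
        dZ (p' : ℤ) (-1 - (b : ℤ)) ^ (-(2 * α)) ≤
      ((a : ℝ) + 1) ^ (-α) * ((b : ℝ) + 1) ^ (-α) *
        (((n : ℝ) - p) ^ (-α) * ((p : ℝ) - p') ^ (-α) * ((p' : ℝ) + 1) ^ (-α)) := by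
  have hU : (1 : ℝ) ≤ n - p := by rw [le_sub_iff_add_le']; exact_mod_cast hp
  have hV : (0 : ℝ) < p - p' := sub_pos.2 (Nat.cast_lt.2 hp')
  rw [dZ_eq_sub (by omega), dZ_eq_sub (by omega), dZ_eq_sub (by omega)]
  push_cast
  calc ((n : ℝ) + a - p) ^ (-(2 * α)) * ((p : ℝ) - p') ^ (-α) * ((p' : ℝ) - (-1 - b)) ^ (-(2 * α))
      = ((n - p : ℝ) + a) ^ (-(2 * α)) * ((p : ℝ) - p') ^ (-α) *
          ((p' + 1 : ℝ) + b) ^ (-(2 * α)) := by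
        ring_nf
    _ ≤ ((n - p : ℝ) ^ (-α) * ((a : ℝ) + 1) ^ (-α)) * ((p : ℝ) - p') ^ (-α) *
        ((p' + 1 : ℝ) ^ (-α) * ((b : ℝ) + 1) ^ (-α)) := by
        gcongr
        · exact add_rpow_neg_two_mul_le hα hU (by positivity)
        · exact add_rpow_neg_two_mul_le hα (by linarith [(p'.cast_nonneg : (0 : ℝ) ≤ p')])
            (by positivity)
    _ = _ := by ring

lemma tsum_dZ_rpow_prod_le (hα : 1 < α) (n : ℕ) :
    ∑' ab : ℕ × ℕ, ∑ p ∈ range n, ∑ p' ∈ range p,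
        dZ ((n : ℤ) + (ab.1 : ℤ)) (p : ℤ) ^ (-(2 * α)) * dZ (p : ℤ) (p' : ℤ) ^ (-α) *
          dZ (p' : ℤ) (-1 - (ab.2 : ℤ)) ^ (-(2 * α))
      ≤ 3 * 3 ^ α * realZeta α ^ 4 * (n : ℝ) ^ (-α) := by
  set T := ∑ p ∈ range n, ∑ p' ∈ range p,
    ((n : ℝ) - p) ^ (-α) * ((p : ℝ) - p') ^ (-α) * ((p' : ℝ) + 1) ^ (-α)
  have hz := summable_nat_add_one_rpow_neg hα
  have hzz := hz.mul_of_nonneg hz (fun _ => by positivity) (fun _ => by positivity)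
  have hle (ab : ℕ × ℕ) : ∑ p ∈ range n, ∑ p' ∈ range p,
      dZ ((n : ℤ) + (ab.1 : ℤ)) (p : ℤ) ^ (-(2 * α)) * dZ (p : ℤ) (p' : ℤ) ^ (-α) *
        dZ (p' : ℤ) (-1 - (ab.2 : ℤ)) ^ (-(2 * α))
      ≤ ((ab.1 : ℝ) + 1) ^ (-α) * ((ab.2 : ℝ) + 1) ^ (-α) * T := by
    simp_rw [T, mul_sum]
    exact sum_le_sum fun p hp => sum_le_sum fun p' hp' =>
      dZ_rpow_prod_le (by linarith) ab.1 ab.2 (mem_range.1 hp) (mem_range.1 hp')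
  have hnonneg (ab : ℕ × ℕ) : 0 ≤ ∑ p ∈ range n, ∑ p' ∈ range p,
      dZ ((n : ℤ) + (ab.1 : ℤ)) (p : ℤ) ^ (-(2 * α)) * dZ (p : ℤ) (p' : ℤ) ^ (-α) *
        dZ (p' : ℤ) (-1 - (ab.2 : ℤ)) ^ (-(2 * α)) := by
    have h (i j : ℤ) (x : ℝ) : 0 ≤ dZ i j ^ x :=
      Real.rpow_nonneg (zero_le_one.trans (le_max_right _ _)) x
    exact sum_nonneg fun _ _ => sum_nonneg fun _ _ => mul_nonneg (mul_nonneg (h ..) (h ..)) (h ..)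
  calc _ ≤ ∑' ab : ℕ × ℕ, ((ab.1 : ℝ) + 1) ^ (-α) * ((ab.2 : ℝ) + 1) ^ (-α) * T :=
        (Summable.of_nonneg_of_le hnonneg hle (hzz.mul_right T)).tsum_le_tsum hle (hzz.mul_right T)
    _ = realZeta α ^ 2 * T := by rw [tsum_mul_right, ← hz.tsum_mul_tsum hz hzz, realZeta, sq]
    _ ≤ realZeta α ^ 2 * ((n / 3 : ℝ) ^ (-α) * (3 * realZeta α ^ 2)) := by
        gcongr; exact sum_sum_rpow_neg_conv_le hα n
    _ = 3 * 3 ^ α * realZeta α ^ 4 * (n : ℝ) ^ (-α) := by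
        rw [Real.div_rpow (by positivity) (by norm_num), Real.rpow_neg (by norm_num : (0 : ℝ) ≤ 3),
          div_inv_eq_mul]
        ring

end

/-- For `α > 1` there is a constant `C` depending only on `α` such that for all `n ≥ 1`:
`∑_{k ≥ n} ∑_{ℓ' < 0} ∑_{n > p > p' ≥ 0} d(k,p)^{-2α} d(p,p')^{-α} d(p',ℓ')^{-2α} ≤ C n^{-α}`;
in particular, for `1 < α ≤ 2` this quantity is `O(n^{2-2α})` (and for `α > 2` it is
`O(n^{-α})`, which is the main bound itself).
Here `k = n + a`, `ℓ' = -1 - b` with `a b : ℕ`. -/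
theorem stmt_5 (α : ℝ) (hα : 1 < α) :
    (∃ C : ℝ, 0 < C ∧ ∀ n : ℕ, 1 ≤ n →
      (∑' ab : ℕ × ℕ, ∑ p ∈ Finset.range n, ∑ p' ∈ Finset.range p,
          dZ ((n : ℤ) + (ab.1 : ℤ)) (p : ℤ) ^ (-(2 * α)) *
            dZ (p : ℤ) (p' : ℤ) ^ (-α) *
              dZ (p' : ℤ) (-1 - (ab.2 : ℤ)) ^ (-(2 * α)))
        ≤ C * (n : ℝ) ^ (-α)) ∧
    (α ≤ 2 → ∃ C' : ℝ, 0 < C' ∧ ∀ n : ℕ, 1 ≤ n →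
      (∑' ab : ℕ × ℕ, ∑ p ∈ Finset.range n, ∑ p' ∈ Finset.range p,
          dZ ((n : ℤ) + (ab.1 : ℤ)) (p : ℤ) ^ (-(2 * α)) *
            dZ (p : ℤ) (p' : ℤ) ^ (-α) *
              dZ (p' : ℤ) (-1 - (ab.2 : ℤ)) ^ (-(2 * α)))
        ≤ C' * (n : ℝ) ^ (2 - 2 * α)) := by
  have hC : 0 < 3 * 3 ^ α * realZeta α ^ 4 := by
    have := one_le_realZeta hα
    positivity
  refine ⟨⟨_, hC, fun n _ => tsum_dZ_rpow_prod_le hα n⟩, fun _ => ⟨_, hC, fun n hn => ?_⟩⟩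
  refine (tsum_dZ_rpow_prod_le hα n).trans (mul_le_mul_of_nonneg_left ?_ hC.le)
  exact Real.rpow_le_rpow_of_exponent_le (by exact_mod_cast hn) (by linarith)
end

section
/- On the product of three independent copies ρ⊗ρ⊗ρ, with notation O^{(i)} for O acting on copy i and O^{(i,j)} = O^{(i)} − O^{(j)}, for bounded observables A, B, C: E[A^{(1)} B^{(1,2)} (C^{(1,3)} + C^{(2,3)})] = κ(A,B,C), the third joint cumulant E[(A−EA)(B−EB)(C−EC)] under ρ. -/
open MeasureTheory

lemma intb {Ω : Type*} [MeasurableSpace Ω] {μ : Measure Ω} [IsFiniteMeasure μ]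
    {f : Ω → ℝ} (hf : Measurable f) {c : ℝ} (h : ∀ ω, |f ω| ≤ c) :
    Integrable f μ :=
  (integrable_const c).mono' hf.aestronglyMeasurable (ae_of_all _ h)

lemma int_lin {Ω : Type*} [MeasurableSpace Ω] (μ : Measure Ω) [IsProbabilityMeasure μ]
    {f1 f2 f3 f4 f5 f6 f7 : Ω → ℝ}
    (h1 : Integrable f1 μ) (h2 : Integrable f2 μ) (h3 : Integrable f3 μ)
    (h4 : Integrable f4 μ) (h5 : Integrable f5 μ) (h6 : Integrable f6 μ)
    (h7 : Integrable f7 μ) (p q1 q2 q3 q4 q5 q6 q7 : ℝ) :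
    ∫ ω, (p + q1 * f1 ω + q2 * f2 ω + q3 * f3 ω + q4 * f4 ω + q5 * f5 ω
        + q6 * f6 ω + q7 * f7 ω) ∂μ
      = p + q1 * ∫ ω, f1 ω ∂μ + q2 * ∫ ω, f2 ω ∂μ + q3 * ∫ ω, f3 ω ∂μ
        + q4 * ∫ ω, f4 ω ∂μ + q5 * ∫ ω, f5 ω ∂μ + q6 * ∫ ω, f6 ω ∂μ
        + q7 * ∫ ω, f7 ω ∂μ := by
  have g7 : Integrable (fun ω => q7 * f7 ω) μ := h7.const_mul q7
  have g6 : Integrable (fun ω => q6 * f6 ω + q7 * f7 ω) μ := (h6.const_mul q6).add g7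
  have g5 : Integrable (fun ω => q5 * f5 ω + (q6 * f6 ω + q7 * f7 ω)) μ :=
    (h5.const_mul q5).add g6
  have g4 : Integrable (fun ω => q4 * f4 ω + (q5 * f5 ω + (q6 * f6 ω + q7 * f7 ω))) μ :=
    (h4.const_mul q4).add g5
  have g3 : Integrable
      (fun ω => q3 * f3 ω + (q4 * f4 ω + (q5 * f5 ω + (q6 * f6 ω + q7 * f7 ω)))) μ :=
    (h3.const_mul q3).add g4
  have g2 : Integrable (fun ω => q2 * f2 ω + (q3 * f3 ω + (q4 * f4 ω
      + (q5 * f5 ω + (q6 * f6 ω + q7 * f7 ω))))) μ := (h2.const_mul q2).add g3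
  have g1 : Integrable (fun ω => q1 * f1 ω + (q2 * f2 ω + (q3 * f3 ω + (q4 * f4 ω
      + (q5 * f5 ω + (q6 * f6 ω + q7 * f7 ω)))))) μ := (h1.const_mul q1).add g2
  rw [show (fun ω => p + q1 * f1 ω + q2 * f2 ω + q3 * f3 ω + q4 * f4 ω + q5 * f5 ω
        + q6 * f6 ω + q7 * f7 ω)
      = fun ω => p + (q1 * f1 ω + (q2 * f2 ω + (q3 * f3 ω + (q4 * f4 ω + (q5 * f5 ω
        + (q6 * f6 ω + q7 * f7 ω)))))) from funext fun ω => by ring]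
  rw [integral_add (integrable_const p) g1, integral_add (h1.const_mul q1) g2,
    integral_add (h2.const_mul q2) g3, integral_add (h3.const_mul q3) g4,
    integral_add (h4.const_mul q4) g5, integral_add (h5.const_mul q5) g6,
    integral_add (h6.const_mul q6) g7]
  simp [integral_const_mul]
  ring

/-- Replica (three-copy) representation of the third joint cumulant: on `ρ ⊗ ρ ⊗ ρ`,
`E[A^{(1)} B^{(1,2)} (C^{(1,3)} + C^{(2,3)})] = E[(A−EA)(B−EB)(C−EC)]`,
where superscript `(i)` denotes the observable on the `i`-th copy and
`O^{(i,j)} = O^{(i)} − O^{(j)}`. -/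
theorem stmt_9 {Ω : Type*} [MeasurableSpace Ω] (ρ : Measure Ω) [IsProbabilityMeasure ρ]
    (A B C : Ω → ℝ) (hA : Measurable A) (hB : Measurable B) (hC : Measurable C)
    (hAbd : ∃ c : ℝ, ∀ ω, |A ω| ≤ c) (hBbd : ∃ c : ℝ, ∀ ω, |B ω| ≤ c)
    (hCbd : ∃ c : ℝ, ∀ ω, |C ω| ≤ c) :
    ∫ p : Ω × Ω × Ω,
        A p.1 * (B p.1 - B p.2.1) * ((C p.1 - C p.2.2) + (C p.2.1 - C p.2.2))
        ∂(ρ.prod (ρ.prod ρ)) =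
      ∫ ω, (A ω - ∫ ω', A ω' ∂ρ) * (B ω - ∫ ω', B ω' ∂ρ) * (C ω - ∫ ω', C ω' ∂ρ) ∂ρ := by
  obtain ⟨ca0, hca0⟩ := hAbd
  obtain ⟨cb0, hcb0⟩ := hBbd
  obtain ⟨cc0, hcc0⟩ := hCbd
  set ca := max ca0 0 with hcadef
  set cb := max cb0 0 with hcbdef
  set cc := max cc0 0 with hccdef
  have hca : ∀ ω, |A ω| ≤ ca := fun ω => (hca0 ω).trans (le_max_left _ _)
  have hcb : ∀ ω, |B ω| ≤ cb := fun ω => (hcb0 ω).trans (le_max_left _ _)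
  have hcc : ∀ ω, |C ω| ≤ cc := fun ω => (hcc0 ω).trans (le_max_left _ _)
  have hca' : (0:ℝ) ≤ ca := le_max_right _ _
  have hcb' : (0:ℝ) ≤ cb := le_max_right _ _
  have hcc' : (0:ℝ) ≤ cc := le_max_right _ _
  -- integrability over ρ
  have iA : Integrable A ρ := intb hA hca
  have iB : Integrable B ρ := intb hB hcb
  have iC : Integrable C ρ := intb hC hcc
  have iAB : Integrable (fun ω => A ω * B ω) ρ := by
    refine intb (hA.mul hB) (c := ca * cb) fun ω => ?_
    rw [abs_mul]; exact mul_le_mul (hca ω) (hcb ω) (abs_nonneg _) hca'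
  have iAC : Integrable (fun ω => A ω * C ω) ρ := by
    refine intb (hA.mul hC) (c := ca * cc) fun ω => ?_
    rw [abs_mul]; exact mul_le_mul (hca ω) (hcc ω) (abs_nonneg _) hca'
  have iBC : Integrable (fun ω => B ω * C ω) ρ := by
    refine intb (hB.mul hC) (c := cb * cc) fun ω => ?_
    rw [abs_mul]; exact mul_le_mul (hcb ω) (hcc ω) (abs_nonneg _) hcb'
  have iABC : Integrable (fun ω => A ω * B ω * C ω) ρ := by
    refine intb ((hA.mul hB).mul hC) (c := ca * cb * cc) fun ω => ?_
    rw [abs_mul, abs_mul]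
    exact mul_le_mul (mul_le_mul (hca ω) (hcb ω) (abs_nonneg _) hca') (hcc ω)
      (abs_nonneg _) (mul_nonneg hca' hcb')
  set a := ∫ ω', A ω' ∂ρ with hadef
  set b := ∫ ω', B ω' ∂ρ with hbdef
  set c := ∫ ω', C ω' ∂ρ with hcdef
  set mab := ∫ ω, A ω * B ω ∂ρ with hmab
  set mac := ∫ ω, A ω * C ω ∂ρ with hmac
  set mbc := ∫ ω, B ω * C ω ∂ρ with hmbc
  set mabc := ∫ ω, A ω * B ω * C ω ∂ρ with hmabc
  -- bound on the full integrand
  have hbound : ∀ p : Ω × Ω × Ω,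
      |A p.1 * (B p.1 - B p.2.1) * ((C p.1 - C p.2.2) + (C p.2.1 - C p.2.2))|
        ≤ ca * (cb + cb) * (cc + cc + (cc + cc)) := by
    intro p
    rw [abs_mul, abs_mul]
    have h1 : |B p.1 - B p.2.1| ≤ cb + cb :=
      (abs_sub _ _).trans (add_le_add (hcb _) (hcb _))
    have h2 : |(C p.1 - C p.2.2) + (C p.2.1 - C p.2.2)| ≤ cc + cc + (cc + cc) :=
      (abs_add_le _ _).trans (add_le_add
        ((abs_sub _ _).trans (add_le_add (hcc _) (hcc _)))
        ((abs_sub _ _).trans (add_le_add (hcc _) (hcc _))))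
    exact mul_le_mul (mul_le_mul (hca _) h1 (abs_nonneg _) hca') h2 (abs_nonneg _)
      (mul_nonneg hca' (by linarith))
  have hmeas3 : Measurable (fun p : Ω × Ω × Ω =>
      A p.1 * (B p.1 - B p.2.1) * ((C p.1 - C p.2.2) + (C p.2.1 - C p.2.2))) := by
    fun_prop
  have hint3 : Integrable (fun p : Ω × Ω × Ω =>
      A p.1 * (B p.1 - B p.2.1) * ((C p.1 - C p.2.2) + (C p.2.1 - C p.2.2)))
      (ρ.prod (ρ.prod ρ)) := intb hmeas3 hbound
  rw [MeasureTheory.integral_prod _ hint3]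
  -- inner double integral, for fixed x
  have hinner : ∀ x : Ω,
      (∫ q : Ω × Ω, A x * (B x - B q.1) * ((C x - C q.2) + (C q.1 - C q.2)) ∂(ρ.prod ρ))
        = 0 + (A x * B x * (C x - 2*c)) * 1 + (-(A x * (C x - 2*c))) * b
          + (A x * B x) * c + (-(A x)) * mbc + 0 * 1 + 0 * 1 + 0 * 1 := by
    intro x
    have hm2 : Measurable (fun q : Ω × Ω =>
        A x * (B x - B q.1) * ((C x - C q.2) + (C q.1 - C q.2))) := by fun_prop
    have hb2 : ∀ q : Ω × Ω,
        |A x * (B x - B q.1) * ((C x - C q.2) + (C q.1 - C q.2))|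
          ≤ ca * (cb + cb) * (cc + cc + (cc + cc)) := fun q => hbound (x, q)
    have hint2 : Integrable (fun q : Ω × Ω =>
        A x * (B x - B q.1) * ((C x - C q.2) + (C q.1 - C q.2))) (ρ.prod ρ) :=
      intb hm2 hb2
    rw [MeasureTheory.integral_prod _ hint2]
    have hz : ∀ y : Ω,
        (∫ z, A x * (B x - B y) * ((C x - C z) + (C y - C z)) ∂ρ)
          = A x * (B x - B y) * (C x + C y - 2*c) := by
      intro y
      rw [show (fun z => A x * (B x - B y) * ((C x - C z) + (C y - C z)))
          = fun z => (A x * (B x - B y) * (C x + C y))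
            + (-(2 * (A x * (B x - B y)))) * C z + 0 * C z + 0 * C z + 0 * C z
            + 0 * C z + 0 * C z + 0 * C z from funext fun z => by ring]
      rw [int_lin ρ iC iC iC iC iC iC iC]
      ring
    rw [show (fun y => ∫ z, A x * (B x - B y) * ((C x - C z) + (C y - C z)) ∂ρ)
        = fun y => (A x * B x * (C x - 2*c)) * 1 + (-(A x * (C x - 2*c))) * B y
          + (A x * B x) * C y + (-(A x)) * (B y * C y) + 0 * (1:ℝ) + 0 * (1:ℝ)
          + 0 * (1:ℝ) from funext fun y => by rw [hz y]; ring]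
    rw [show (fun y => (A x * B x * (C x - 2*c)) * 1 + (-(A x * (C x - 2*c))) * B y
          + (A x * B x) * C y + (-(A x)) * (B y * C y) + 0 * (1:ℝ) + 0 * (1:ℝ)
          + 0 * (1:ℝ))
        = fun y => (0:ℝ) + (A x * B x * (C x - 2*c)) * (fun _ => (1:ℝ)) y
          + (-(A x * (C x - 2*c))) * B y + (A x * B x) * C y
          + (-(A x)) * (B y * C y) + 0 * (fun _ => (1:ℝ)) y
          + 0 * (fun _ => (1:ℝ)) y + 0 * (fun _ => (1:ℝ)) y
        from funext fun y => by ring]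
    rw [int_lin ρ (integrable_const 1) iB iC iBC (integrable_const 1)
        (integrable_const 1) (integrable_const 1)]
    simp [← hbdef, ← hcdef, ← hmbc]
  simp only [hinner]
  rw [show (fun x => 0 + (A x * B x * (C x - 2*c)) * 1 + (-(A x * (C x - 2*c))) * b
        + (A x * B x) * c + (-(A x)) * mbc + 0 * 1 + 0 * 1 + 0 * 1)
      = fun x => (0:ℝ) + 1 * (A x * B x * C x) + (-c) * (A x * B x)
        + (-b) * (A x * C x) + (2*b*c - mbc) * A x + 0 * A x + 0 * A x + 0 * A x
      from funext fun x => by ring]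
  rw [int_lin ρ iABC iAB iAC iA iA iA iA]
  rw [show (fun ω => (A ω - a) * (B ω - b) * (C ω - c))
      = fun ω => (-(a*b*c)) + (b*c) * A ω + (a*c) * B ω + (a*b) * C ω
        + (-c) * (A ω * B ω) + (-b) * (A ω * C ω) + (-a) * (B ω * C ω)
        + 1 * (A ω * B ω * C ω) from funext fun ω => by ring]
  rw [int_lin ρ iA iB iC iAB iAC iBC iABC]
  rw [← hadef, ← hbdef, ← hcdef, ← hmab, ← hmac, ← hmbc, ← hmabc]
  ring
end

section
/- For all positive integers ℓ and positive real x: ∑_{v=1}^{ℓ} ∑_{n₁+⋯+n_v = ℓ, nⱼ ≥ 1} (x/n₁)^{n₁} (n₁/n₂)^{n₂} ⋯ (n_{v-1}/n_v)^{n_v} ≤ e^{ℓ} e^{x} 2^{ℓ-1}, using nⱼ! ≥ (nⱼ/e)^{nⱼ} and (1 + a/b)^b ≤ e^a. -/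
/-- The `j`-th part of a composition `c : Fin v → ℕ`, extended by `0` outside. -/
def cval {v : ℕ} (c : Fin v → ℕ) (j : ℕ) : ℕ := if h : j < v then c ⟨j, h⟩ else 0

/-- The product `(x/n₁)^{n₁} (n₁/n₂)^{n₂} ⋯ (n_{v−1}/n_v)^{n_v}` associated with a
composition `(n₁,…,n_v) = c` and a real parameter `x`. -/
noncomputable def layerTerm (x : ℝ) (v : ℕ) (c : Fin v → ℕ) : ℝ :=
  ∏ j ∈ Finset.range v,
    ((if j = 0 then x else (cval c (j - 1) : ℝ)) / (cval c j : ℝ)) ^ (cval c j)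

lemma pow_div_le_exp (t : ℝ) (ht : 0 ≤ t) (n : ℕ) (hn : 1 ≤ n) :
    (t / n) ^ n ≤ Real.exp (t - n) := by
  have hn' : (0:ℝ) < n := by exact_mod_cast hn
  have h1 : t / n ≤ Real.exp (t / n - 1) := by
    have := Real.add_one_le_exp (t / n - 1); linarith
  calc (t/n)^n ≤ (Real.exp (t/n - 1))^n := by
        exact pow_le_pow_left₀ (by positivity) h1 n
    _ = Real.exp ((n : ℝ) * (t/n - 1)) := by rw [← Real.exp_nat_mul]
    _ = Real.exp (t - n) := by congr 1; field_simp
  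
lemma layerTerm_le_exp (x : ℝ) (hx : 0 < x) (v : ℕ) (c : Fin v → ℕ)
    (hc : ∀ j, 1 ≤ c j) : layerTerm x v c ≤ Real.exp x := by
  set a : ℕ → ℝ := fun j => if j = 0 then x else (cval c (j-1) : ℝ) with ha
  have hanonneg : ∀ j, 0 ≤ a j := by
    intro j; simp only [ha]; split
    · exact hx.le
    · positivity
  have hstep : ∀ j, a (j+1) = (cval c j : ℝ) := by intro j; simp [ha]
  have h1 : layerTerm x v c ≤ ∏ j ∈ Finset.range v, Real.exp (a j - a (j+1)) := by
    apply Finset.prod_le_prod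
    · intro j hj
      have := hanonneg j
      positivity
    · intro j hj
      have hj' : j < v := Finset.mem_range.mp hj
      have hcv : cval c j = c ⟨j, hj'⟩ := dif_pos hj'
      rw [hstep j]
      exact pow_div_le_exp (a j) (hanonneg j) (cval c j) (by rw [hcv]; exact hc _)
  have h2 : ∏ j ∈ Finset.range v, Real.exp (a j - a (j+1))
      = Real.exp (∑ j ∈ Finset.range v, (a j - a (j+1))) := by
    rw [Real.exp_sum]
  have h3 : ∑ j ∈ Finset.range v, (a j - a (j+1)) = a 0 - a v :=
    Finset.sum_range_sub' a v
  have h4 : a 0 = x := by simp [ha]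
  calc layerTerm x v c ≤ Real.exp (a 0 - a v) := by rw [← h3, ← h2]; exact h1
    _ ≤ Real.exp x := by
        apply Real.exp_le_exp.mpr
        have := hanonneg v
        rw [h4]; linarith

/-- Map a pair (length, tuple) to a composition, with junk value outside the valid set. -/
noncomputable def toComp (ℓ : ℕ) (hℓ : 1 ≤ ℓ) (s : Σ v : ℕ, Fin v → ℕ) : Composition ℓ :=
  if h : (List.ofFn s.2).sum = ℓ ∧ ∀ i ∈ List.ofFn s.2, 0 < i then
    ⟨List.ofFn s.2, fun hi => h.2 _ hi, h.1⟩ else Composition.ones ℓ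

lemma count_le (ℓ : ℕ) (hℓ : 1 ≤ ℓ) :
    ∑ v ∈ Finset.Icc 1 ℓ,
      ((Finset.Nat.antidiagonalTuple v ℓ).filter (fun c => ∀ j, 1 ≤ c j)).card
      ≤ 2 ^ (ℓ - 1) := by
  classical
  rw [← composition_card ℓ, ← Finset.card_univ, ← Finset.card_sigma]
  apply Finset.card_le_card_of_injOn (toComp ℓ hℓ)
  · intro _ _; exact Finset.mem_univ _
  · rintro ⟨v, c⟩ hs ⟨v', c'⟩ hs' heq
    obtain ⟨-, hs2⟩ := Finset.mem_sigma.mp hs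
    obtain ⟨hsum, hpos⟩ := Finset.mem_filter.mp hs2
    rw [Finset.Nat.mem_antidiagonalTuple] at hsum
    obtain ⟨-, hs2'⟩ := Finset.mem_sigma.mp hs'
    obtain ⟨hsum', hpos'⟩ := Finset.mem_filter.mp hs2'
    rw [Finset.Nat.mem_antidiagonalTuple] at hsum'
    have hcond : ∀ (v₀ : ℕ) (c₀ : Fin v₀ → ℕ), (∑ i, c₀ i = ℓ) → (∀ j, 1 ≤ c₀ j) →
        (List.ofFn c₀).sum = ℓ ∧ ∀ i ∈ List.ofFn c₀, 0 < i := by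
      intro v₀ c₀ hsum hpos
      refine ⟨by rw [List.sum_ofFn]; exact hsum, ?_⟩
      intro i hi
      rw [List.mem_ofFn] at hi
      obtain ⟨j, rfl⟩ := hi
      exact hpos j
    have e1 := hcond v c hsum hpos
    have e2 := hcond v' c' hsum' hpos'
    unfold toComp at heq
    rw [dif_pos e1, dif_pos e2] at heq
    have hb : List.ofFn c = List.ofFn c' := congrArg Composition.blocks heq
    have hv : v = v' := by
      have := congrArg List.length hb
      simpa using this
    subst hv
    have : c = c' := List.ofFn_injective hb
    simp [this]

/-- Layered-structure estimate: for all `ℓ ≥ 1` and `x > 0`,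
`∑_{v=1}^{ℓ} ∑_{n₁+⋯+n_v = ℓ, nⱼ ≥ 1} (x/n₁)^{n₁}(n₁/n₂)^{n₂}⋯(n_{v−1}/n_v)^{n_v}
  ≤ e^ℓ e^x 2^{ℓ−1}`. -/
theorem stmt_13 (ℓ : ℕ) (hℓ : 1 ≤ ℓ) (x : ℝ) (hx : 0 < x) :
    ∑ v ∈ Finset.Icc 1 ℓ,
        ∑ c ∈ (Finset.Nat.antidiagonalTuple v ℓ).filter (fun c => ∀ j, 1 ≤ c j),
          layerTerm x v c
      ≤ Real.exp ℓ * Real.exp x * 2 ^ (ℓ - 1) := by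
  have h1 : ∑ v ∈ Finset.Icc 1 ℓ,
        ∑ c ∈ (Finset.Nat.antidiagonalTuple v ℓ).filter (fun c => ∀ j, 1 ≤ c j),
          layerTerm x v c
      ≤ ∑ v ∈ Finset.Icc 1 ℓ,
        ((Finset.Nat.antidiagonalTuple v ℓ).filter (fun c => ∀ j, 1 ≤ c j)).card
          * Real.exp x := by
    apply Finset.sum_le_sum
    intro v hv
    have := Finset.sum_le_card_nsmul
      ((Finset.Nat.antidiagonalTuple v ℓ).filter (fun c => ∀ j, 1 ≤ c j))
      (layerTerm x v) (Real.exp x)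
      (fun c hc => layerTerm_le_exp x hx v c (Finset.mem_filter.mp hc).2)
    simpa [nsmul_eq_mul] using this
  have h2 : ∑ v ∈ Finset.Icc 1 ℓ,
      (((Finset.Nat.antidiagonalTuple v ℓ).filter (fun c => ∀ j, 1 ≤ c j)).card : ℝ)
        * Real.exp x
      ≤ (2 ^ (ℓ - 1) : ℝ) * Real.exp x := by
    rw [← Finset.sum_mul]
    apply mul_le_mul_of_nonneg_right _ (Real.exp_pos x).le
    have := count_le ℓ hℓ
    exact_mod_cast this
  have h3 : (2 ^ (ℓ - 1) : ℝ) * Real.exp x ≤ Real.exp ℓ * Real.exp x * 2 ^ (ℓ - 1) := by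
    have h4 : (1:ℝ) ≤ Real.exp ℓ := Real.one_le_exp (by positivity)
    have heq : Real.exp ℓ * Real.exp x * 2 ^ (ℓ - 1)
        = Real.exp ℓ * (2 ^ (ℓ - 1) * Real.exp x) := by ring
    rw [heq]
    exact le_mul_of_one_le_left (by positivity) h4
  calc _ ≤ _ := h1
    _ ≤ _ := h2
    _ ≤ _ := h3
end
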